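/- arXiv:math/9304204 — 5 statements merged into one kernel-verified Lean document; each statement's English description precedes it below -/
import Mathlib

section
/- For each infinite X ⊆ ℕ define h_X(n) = next(n, X) + |Xᶜ ∩ {0,…,n−1}|, and let F be the downward closure under ≤* (within ω^↑ω) of {h_X : X an infinite subset of ℕ}. Then F belongs to the S-class and b(F) = 2; in particular no single member of F is unbounded in F, since whenever Y ⊆ X with X ∖ Y infinite one has h_X ≺ h_Y. -/
open Filter Set

/-- The set of monotone (nondecreasing) functions ℕ → ℕ, i.e. ω^↑ω. -/
def MonoFam : Set (ℕ → ℕ) := {f | Monotone f}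

/-- `f ≤* g` : `f n ≤ g n` for all but finitely many `n`. -/
def LeStar (f g : ℕ → ℕ) : Prop := ∀ᶠ n in atTop, f n ≤ g n

/-- `f <* g` : `f n < g n` for all but finitely many `n`. -/
def LtStar (f g : ℕ → ℕ) : Prop := ∀ᶠ n in atTop, f n < g n

/-- `f ≺ g` : `lim (g n - f n) = +∞`. -/
def Prec (f g : ℕ → ℕ) : Prop := ∀ N : ℕ, ∀ᶠ n in atTop, f n + N ≤ g n

/-- `F` is closed downward under `≤*` within the monotone functions. -/
def DownwardClosed (F : Set (ℕ → ℕ)) : Prop :=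
  ∀ f, Monotone f → ∀ g ∈ F, LeStar f g → f ∈ F

/-- `H` is unbounded in `F`. -/
def UnboundedIn (H F : Set (ℕ → ℕ)) : Prop :=
  ∀ f ∈ F, ∃ h ∈ H, ¬ LtStar h f

/-- `H` dominates `F`. -/
def DominatesIn (H F : Set (ℕ → ℕ)) : Prop :=
  ∀ f ∈ F, ∃ h ∈ H, LeStar f h

/-- The bounding number `b(F)`. -/
noncomputable def bNum (F : Set (ℕ → ℕ)) : Cardinal :=
  sInf {c : Cardinal | ∃ H : Set (ℕ → ℕ), H ⊆ F ∧ UnboundedIn H F ∧ Cardinal.mk H = c}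

/-- The dominating number `d(F)`. -/
noncomputable def dNum (F : Set (ℕ → ℕ)) : Cardinal :=
  sInf {c : Cardinal | ∃ H : Set (ℕ → ℕ), H ⊆ F ∧ DominatesIn H F ∧ Cardinal.mk H = c}

/-- Membership in the S-class. -/
def SClass (F : Set (ℕ → ℕ)) : Prop :=
  ∃ h g : ℕ → ℕ, Monotone h ∧ Monotone g ∧
    (∀ f ∈ F, ∃ᶠ n in atTop, f n ≤ h n) ∧
    (∀ f, Monotone f → (∃ᶠ n in atTop, f n ≤ g n) → f ∈ F)

/-- A nonprincipal ultrafilter. -/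
def NonPrincipal (U : Ultrafilter ℕ) : Prop := ∀ a : ℕ, U ≠ pure a

/-- Membership in the U-class for an ultrafilter `U`. -/
def UClass (U : Ultrafilter ℕ) (F : Set (ℕ → ℕ)) : Prop :=
  ∃ h g : ℕ → ℕ, Monotone h ∧ Monotone g ∧
    (∀ f ∈ F, {n | f n ≤ h n} ∈ U) ∧
    (∀ f, Monotone f → {n | f n ≤ g n} ∈ U → f ∈ F)

/-- `χ(U)`, the least cardinality of a base generating the ultrafilter `U`. -/
noncomputable def ultraChi (U : Ultrafilter ℕ) : Cardinal :=
  sInf {c : Cardinal | ∃ B : Set (Set ℕ),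
    (∀ b ∈ B, b ∈ U) ∧ (∀ A ∈ U, ∃ b ∈ B, b ⊆ A) ∧ Cardinal.mk B = c}

/-- The ultrafilter number `𝔲`. -/
noncomputable def uNum : Cardinal :=
  sInf {c : Cardinal | ∃ U : Ultrafilter ℕ, NonPrincipal U ∧ ultraChi U = c}

/-- `A ⊆* B` : `A \ B` is finite. -/
def SubsetStar (A B : Set ℕ) : Prop := (A \ B).Finite

/-- A P-point. -/
def PPoint (V : Ultrafilter ℕ) : Prop :=
  NonPrincipal V ∧ ∀ C : Set (Set ℕ), C.Countable → (∀ A ∈ C, A ∈ V) →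
    ∃ B ∈ V, ∀ A ∈ C, SubsetStar B A

/-- A `P_κ`-point. -/
def PKappaPoint (κ : Cardinal) (V : Ultrafilter ℕ) : Prop :=
  NonPrincipal V ∧ ∀ C : Set (Set ℕ), Cardinal.mk C < κ → (∀ A ∈ C, A ∈ V) →
    ∃ B ∈ V, ∀ A ∈ C, SubsetStar B A

/-- `next(n, X)` : the least element of `X` which is `≥ n`. -/
noncomputable def nextIn (n : ℕ) (X : Set ℕ) : ℕ := sInf {x | x ∈ X ∧ n ≤ x}

/-- `F↓` : the monotone functions `g` with `f ≺ g` for all `f ∈ F`. -/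
def FDown (F : Set (ℕ → ℕ)) : Set (ℕ → ℕ) := {g | Monotone g ∧ ∀ f ∈ F, Prec f g}

/-- `F` has a countable upper bound. -/
def CountableUpperBound (F : Set (ℕ → ℕ)) : Prop :=
  ∃ G : Set (ℕ → ℕ), G.Countable ∧ G ⊆ FDown F ∧
    ¬ ∃ p, Monotone p ∧ (∀ f ∈ F, Prec f p) ∧ (∀ g ∈ G, Prec p g)

/-- `h_X(n) = next(n, X) + |Xᶜ ∩ [0, n)|`. -/
noncomputable def hFun (X : Set ℕ) : ℕ → ℕ :=
  fun n => nextIn n X + (Xᶜ ∩ Set.Iio n).ncard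

/-!
Writing `c_X(n) = |X ∩ [0, n)|`, we have `h_X(n) = next(n, X) + n - c_X(n)`, so `h_X(n) ≤ 2n`
for `n ∈ X`, while a monotone `f` with `f(n) ≤ n` for infinitely many `n` lies below
`next(·, {f ≤ id})`: this gives the S-class witnesses `2n` and `n`. Removing an infinite part of
`X` does not lower `next(n, ·)` but makes `n - c(n)` grow without bound, whence `h_X ≺ h_Y` and
`b ≥ 2`. For `b ≤ 2`, split `{2^j}` into its even- and odd-indexed halves: if `2^j` is the first
of its points `≥ n`, the other half has its next point at `2^(j+1) ≥ n + j` or later and fewer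
than `j` points below `n`, so one of the two `h`'s is at least `2n` at every `n`.
-/

lemma infinite_setOf_even : {i : ℕ | Even i}.Infinite :=
  infinite_of_forall_exists_gt fun i => ⟨2 * i + 2, ⟨i + 1, by ring⟩, by omega⟩

lemma infinite_setOf_odd : {i : ℕ | Odd i}.Infinite :=
  infinite_of_forall_exists_gt fun i => ⟨2 * i + 1, ⟨i, rfl⟩, by omega⟩

section nextIn

variable {X : Set ℕ} {m n x : ℕ}

lemma nextIn_mem (hX : X.Infinite) (n : ℕ) : nextIn n X ∈ X ∧ n ≤ nextIn n X :=
  let ⟨x, hx, hnx⟩ := hX.exists_gt n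
  Nat.sInf_mem (⟨x, hx, hnx.le⟩ : {y | y ∈ X ∧ n ≤ y}.Nonempty)

lemma nextIn_le (hx : x ∈ X) (hnx : n ≤ x) : nextIn n X ≤ x :=
  Nat.sInf_le ⟨hx, hnx⟩

lemma nextIn_mono (hX : X.Infinite) (hmn : m ≤ n) : nextIn m X ≤ nextIn n X :=
  nextIn_le (nextIn_mem hX n).1 (hmn.trans (nextIn_mem hX n).2)

end nextIn

section hFun

variable {X Y : Set ℕ} {n : ℕ}

lemma ncard_compl_inter_Iio_add (X : Set ℕ) (n : ℕ) :
    (Xᶜ ∩ Iio n).ncard + (X ∩ Iio n).ncard = n := by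
  have h := ncard_inter_add_ncard_sdiff_eq_ncard (Iio n) X
  rwa [ncard_Iio_nat, inter_comm, sdiff_eq_compl_inter, add_comm] at h

lemma eventually_le_ncard_inter_Iio (hX : X.Infinite) (N : ℕ) :
    ∀ᶠ n in atTop, N ≤ (X ∩ Iio n).ncard := by
  obtain ⟨T, hTX, rfl⟩ := hX.exists_subset_card_eq N
  obtain ⟨m, hTm⟩ := T.exists_nat_subset_range
  filter_upwards [eventually_ge_atTop m] with n hmn
  rw [← ncard_coe_finset]
  exact ncard_le_ncard (fun x hx => ⟨hTX hx, (Finset.mem_range.1 (hTm hx)).trans_le hmn⟩)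
    ((finite_Iio n).inter_of_right X)

lemma hFun_monotone (hX : X.Infinite) : Monotone (hFun X) := fun _ n hmn =>
  add_le_add (nextIn_mono hX hmn)
    (ncard_le_ncard (inter_subset_inter_right _ (Iio_subset_Iio hmn))
      ((finite_Iio n).inter_of_right _))

lemma hFun_le_two_mul (hn : n ∈ X) : hFun X n ≤ 2 * n := by
  have := nextIn_le hn le_rfl
  have := ncard_compl_inter_Iio_add X n
  unfold hFun
  omega

lemma prec_hFun_of_subset (hY : Y.Infinite) (hYX : Y ⊆ X) (hXY : (X \ Y).Infinite) :
    Prec (hFun X) (hFun Y) := by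
  intro N
  filter_upwards [eventually_le_ncard_inter_Iio hXY N] with n hN
  have hnext : nextIn n X ≤ nextIn n Y := nextIn_le (hYX (nextIn_mem hY n).1) (nextIn_mem hY n).2
  have hdisj : Disjoint (Xᶜ ∩ Iio n) (X \ Y ∩ Iio n) :=
    disjoint_left.2 fun _ hx hx' => hx.1 hx'.1.1
  have hunion : (Xᶜ ∩ Iio n) ∪ (X \ Y ∩ Iio n) ⊆ Yᶜ ∩ Iio n := by
    rintro x (⟨hxX, hxn⟩ | ⟨⟨-, hxY⟩, hxn⟩)
    exacts [⟨fun hxY => hxX (hYX hxY), hxn⟩, ⟨hxY, hxn⟩]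
  have hcount := ncard_le_ncard hunion ((finite_Iio n).inter_of_right _)
  rw [ncard_union_eq hdisj ((finite_Iio n).inter_of_right _) ((finite_Iio n).inter_of_right _)]
    at hcount
  unfold hFun
  omega

lemma exists_infinite_subset_infinite_diff (hX : X.Infinite) :
    ∃ Y ⊆ X, Y.Infinite ∧ (X \ Y).Infinite := by
  have ha : StrictMono (Nat.nth (· ∈ X)) := Nat.nth_strictMono hX
  have hmem : ∀ i, Nat.nth (· ∈ X) i ∈ X := Nat.nth_mem_of_infinite hX
  refine ⟨Nat.nth (· ∈ X) '' {i | Even i}, image_subset_iff.2 fun i _ => hmem i,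
    infinite_setOf_even.image ha.injective.injOn,
    (infinite_setOf_odd.image ha.injective.injOn).mono ?_⟩
  rintro _ ⟨i, hi, rfl⟩
  refine ⟨hmem i, ?_⟩
  rintro ⟨k, hk, hki⟩
  exact Nat.not_even_iff_odd.2 hi (ha.injective hki ▸ hk)

end hFun

abbrev hFamily : Set (ℕ → ℕ) := {f | Monotone f ∧ ∃ X : Set ℕ, X.Infinite ∧ LeStar f (hFun X)}

lemma hFun_mem_hFamily {X : Set ℕ} (hX : X.Infinite) : hFun X ∈ hFamily :=
  ⟨hFun_monotone hX, X, hX, Eventually.of_forall fun _ => le_rfl⟩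

lemma frequently_le_two_mul_of_mem_hFamily {f : ℕ → ℕ} (hf : f ∈ hFamily) :
    ∃ᶠ n in atTop, f n ≤ 2 * n := by
  obtain ⟨-, X, hX, hfX⟩ := hf
  exact (Nat.frequently_atTop_iff_infinite.2 hX).mp
    (hfX.mono fun _ hn hnX => hn.trans (hFun_le_two_mul hnX))

lemma mem_hFamily_of_frequently_le {f : ℕ → ℕ} (hf : Monotone f)
    (hfreq : ∃ᶠ n in atTop, f n ≤ n) : f ∈ hFamily := by
  have hX : {n | f n ≤ n}.Infinite := Nat.frequently_atTop_iff_infinite.1 hfreq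
  refine ⟨hf, _, hX, Eventually.of_forall fun n => ?_⟩
  obtain ⟨hmem, hle⟩ := nextIn_mem hX n
  exact (hf hle).trans (hmem.trans (Nat.le_add_right _ _))

lemma sClass_hFamily : SClass hFamily :=
  ⟨(2 * ·), id, fun _ _ h => Nat.mul_le_mul_left 2 h, monotone_id,
    fun _ => frequently_le_two_mul_of_mem_hFamily, fun _ => mem_hFamily_of_frequently_le⟩

lemma not_ltStar_of_frequently_le {f g : ℕ → ℕ} (h : ∃ᶠ n in atTop, g n ≤ f n) : ¬ LtStar f g :=
  fun hlt => (h.and_eventually hlt).exists.elim fun _ hn => (hn.1.trans_lt hn.2).false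

lemma not_unboundedIn_singleton {f : ℕ → ℕ} (hf : f ∈ hFamily) : ¬ UnboundedIn {f} hFamily := by
  obtain ⟨-, X, hX, hfX⟩ := hf
  obtain ⟨Y, hYX, hY, hXY⟩ := exists_infinite_subset_infinite_diff hX
  intro hunb
  obtain ⟨_, rfl, hnlt⟩ := hunb _ (hFun_mem_hFamily hY)
  exact hnlt ((hfX.and (prec_hFun_of_subset hY hYX hXY 1)).mono fun _ hn => by omega)

lemma not_unboundedIn_of_subsingleton {H : Set (ℕ → ℕ)} (hHF : H ⊆ hFamily)
    (hH : H.Subsingleton) : ¬ UnboundedIn H hFamily := by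
  intro hunb
  obtain ⟨f, hfH, -⟩ := hunb _ (hFun_mem_hFamily infinite_univ)
  rw [hH.eq_singleton_of_mem hfH] at hunb
  exact not_unboundedIn_singleton (hHF hfH) hunb

section gaps

variable {a : ℕ → ℕ}

lemma strictMono_of_add_lt_succ (hgap : ∀ j, a j + j < a (j + 1)) : StrictMono a :=
  strictMono_nat_of_lt_succ fun j => (Nat.le_add_right _ _).trans_lt (hgap j)

lemma two_mul_le_hFun_image (hgap : ∀ j, a j + j < a (j + 1)) {S : Set ℕ} (hS : S.Infinite)
    {n j : ℕ} (hjS : j ∉ S) (hn : n ≤ a j) (hlt : ∀ i < j, a i < n) : 2 * n ≤ hFun (a '' S) n := by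
  have ha := strictMono_of_add_lt_succ hgap
  obtain ⟨⟨i, hiS, hi⟩, hni⟩ := nextIn_mem (hS.image ha.injective.injOn) n
  have hji : j + 1 ≤ i := by
    by_contra! hij
    have hij : i < j := lt_of_le_of_ne (Nat.lt_succ_iff.1 hij) (ne_of_mem_of_not_mem hiS hjS)
    exact (hlt i hij).not_ge (hi ▸ hni)
  have hnext : n + j ≤ nextIn n (a '' S) := calc
    n + j ≤ a (j + 1) := (Nat.add_le_add_right hn j).trans (hgap j).le
    _ ≤ nextIn n (a '' S) := hi ▸ ha.monotone hji
  have hcount : (a '' S ∩ Iio n).ncard ≤ j := calc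
    (a '' S ∩ Iio n).ncard ≤ (a '' Iio j).ncard := by
      refine ncard_le_ncard ?_ ((finite_Iio j).image a)
      rintro _ ⟨⟨i, -, rfl⟩, hin⟩
      exact ⟨i, lt_of_not_ge fun hji => (hin.trans_le (hn.trans (ha.monotone hji))).false, rfl⟩
    _ ≤ j := (ncard_image_le (finite_Iio j)).trans (ncard_Iio_nat j).le
  have := ncard_compl_inter_Iio_add (a '' S) n
  unfold hFun
  omega

lemma two_mul_le_hFun_even_or_odd (hgap : ∀ j, a j + j < a (j + 1)) (n : ℕ) :
    2 * n ≤ hFun (a '' {i | Even i}) n ∨ 2 * n ≤ hFun (a '' {i | Odd i}) n := by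
  have hex : ∃ j, n ≤ a j := ⟨n, (strictMono_of_add_lt_succ hgap).le_apply⟩
  have hlt : ∀ i < Nat.find hex, a i < n := fun i hi => lt_of_not_ge (Nat.find_min hex hi)
  rcases Nat.even_or_odd (Nat.find hex) with heven | hodd
  · exact .inr (two_mul_le_hFun_image hgap infinite_setOf_odd (Nat.not_odd_iff_even.2 heven)
      (Nat.find_spec hex) hlt)
  · exact .inl (two_mul_le_hFun_image hgap infinite_setOf_even (Nat.not_even_iff_odd.2 hodd)
      (Nat.find_spec hex) hlt)

lemma unboundedIn_hFun_even_odd (hgap : ∀ j, a j + j < a (j + 1)) :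
    UnboundedIn {hFun (a '' {i | Even i}), hFun (a '' {i | Odd i})} hFamily := by
  intro f hf
  have hfreq := (frequently_le_two_mul_of_mem_hFamily hf).mp (Eventually.of_forall fun n hn =>
    (two_mul_le_hFun_even_or_odd hgap n).imp hn.trans hn.trans)
  rcases frequently_or_distrib.1 hfreq with heven | hodd
  exacts [⟨_, .inl rfl, not_ltStar_of_frequently_le heven⟩,
    ⟨_, .inr rfl, not_ltStar_of_frequently_le hodd⟩]

end gaps

lemma bNum_hFamily : bNum hFamily = 2 := by
  have hgap : ∀ j, 2 ^ j + j < 2 ^ (j + 1) := fun j => by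
    have := @Nat.lt_two_pow_self j
    rw [pow_succ]
    omega
  have hinj := (strictMono_of_add_lt_succ hgap).injective
  set H : Set (ℕ → ℕ) := {hFun ((2 ^ ·) '' {i | Even i}), hFun ((2 ^ ·) '' {i | Odd i})}
  have hH : Cardinal.mk H ∈ {c | ∃ H ⊆ hFamily, UnboundedIn H hFamily ∧ Cardinal.mk H = c} :=
    ⟨H, by
      rintro _ (rfl | rfl)
      exacts [hFun_mem_hFamily (infinite_setOf_even.image hinj.injOn),
        hFun_mem_hFamily (infinite_setOf_odd.image hinj.injOn)],
      unboundedIn_hFun_even_odd hgap, rfl⟩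
  refine le_antisymm ((csInf_le (OrderBot.bddBelow _) hH).trans ?_) (le_csInf ⟨_, hH⟩ ?_)
  · exact Cardinal.mk_insert_le.trans (by rw [Cardinal.mk_singleton, one_add_one_eq_two])
  · rintro _ ⟨H', hH'F, hunb, rfl⟩
    rw [Cardinal.two_le_iff_one_lt, ← not_le, Cardinal.mk_le_one_iff_set_subsingleton]
    exact fun hsub => not_unboundedIn_of_subsingleton hH'F hsub hunb

/-- The downward closure of `{h_X : X infinite}` is in the S-class
and has bounding number `2`; no single member is unbounded in it, since
`h_X ≺ h_Y` whenever `Y ⊆ X` with `X \ Y` infinite. -/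
theorem sclass_bounding_two :
    SClass {f | Monotone f ∧ ∃ X : Set ℕ, X.Infinite ∧ LeStar f (hFun X)} ∧
    bNum {f | Monotone f ∧ ∃ X : Set ℕ, X.Infinite ∧ LeStar f (hFun X)} = 2 ∧
    (∀ f ∈ {f | Monotone f ∧ ∃ X : Set ℕ, X.Infinite ∧ LeStar f (hFun X)},
      ¬ UnboundedIn {f} {f | Monotone f ∧ ∃ X : Set ℕ, X.Infinite ∧ LeStar f (hFun X)}) ∧
    (∀ X Y : Set ℕ, X.Infinite → Y.Infinite → Y ⊆ X → (X \ Y).Infinite →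
      Prec (hFun X) (hFun Y)) :=
  ⟨sClass_hFamily, bNum_hFamily, fun _ hf => not_unboundedIn_singleton hf,
    fun _ _ _ hY hYX hXY => prec_hFun_of_subset hY hYX hXY⟩
end

section
/- For a strictly increasing function h : ℕ → ℕ with h(n) > n for all n, define f_h : ℕ → ℕ by f_h(n) = n² − m(h, n), where m(h, n) is the least m with n ≤ h(m) (note m(h, n) ≤ n, so the subtraction does not truncate). Then for any two such functions h₁, h₂: h₁ ≤* h₂ if and only if f_{h₁} ≤* f_{h₂}. -/
open Filter Set

/-- `m(h, n)`: the least `m` with `n ≤ h m`. -/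
noncomputable def mIdx (h : ℕ → ℕ) (n : ℕ) : ℕ := sInf {m | n ≤ h m}

/-- `f_h(n) = n² − m(h, n)`. -/
noncomputable def fIdx (h : ℕ → ℕ) : ℕ → ℕ := fun n => n ^ 2 - mIdx h n


lemma mIdx_spec (h : ℕ → ℕ) (hgt : ∀ n, n < h n) (n : ℕ) : n ≤ h (mIdx h n) :=
  Nat.sInf_mem (⟨n, (hgt n).le⟩ : {m | n ≤ h m}.Nonempty)

lemma mIdx_le (h : ℕ → ℕ) {n k : ℕ} (hk : n ≤ h k) : mIdx h n ≤ k := Nat.sInf_le hk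

/-- For strictly increasing `h₁, h₂` with `h(n) > n`,
`h₁ ≤* h₂ ↔ f_{h₁} ≤* f_{h₂}`. -/
theorem leStar_iff_fIdx_leStar (h₁ h₂ : ℕ → ℕ)
    (hs₁ : StrictMono h₁) (hgt₁ : ∀ n, n < h₁ n)
    (hs₂ : StrictMono h₂) (hgt₂ : ∀ n, n < h₂ n) :
    LeStar h₁ h₂ ↔ LeStar (fIdx h₁) (fIdx h₂) := by
  constructor
  · intro H
    rw [LeStar, eventually_atTop] at H ⊢
    obtain ⟨N, hN⟩ := H
    refine ⟨h₁ N + 1, fun n hn => ?_⟩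
    have hm1 : n ≤ h₁ (mIdx h₁ n) := mIdx_spec h₁ hgt₁ n
    have hNle : N ≤ mIdx h₁ n := by
      by_contra hc
      push_neg at hc
      have := hs₁.monotone hc.le
      omega
    have hm2 : mIdx h₂ n ≤ mIdx h₁ n := mIdx_le h₂ (hm1.trans (hN _ hNle))
    have h1n : mIdx h₁ n ≤ n := mIdx_le h₁ (hgt₁ n).le
    have hsq : n ≤ n ^ 2 := Nat.le_self_pow (by norm_num) n
    simp only [fIdx]
    omega
  · intro H
    rw [LeStar, eventually_atTop] at H ⊢
    obtain ⟨N, hN⟩ := H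
    refine ⟨N, fun k hk => ?_⟩
    set n := h₂ k + 1 with hn
    have hnN : N ≤ n := by have := hgt₂ k; omega
    have hf := hN n hnN
    have h1n : mIdx h₁ n ≤ n := mIdx_le h₁ (hgt₁ n).le
    have h2n : mIdx h₂ n ≤ n := mIdx_le h₂ (hgt₂ n).le
    have hsq : n ≤ n ^ 2 := Nat.le_self_pow (by norm_num) n
    simp only [fIdx] at hf
    have hm : mIdx h₂ n ≤ mIdx h₁ n := by omega
    have hk2 : k < mIdx h₂ n := by
      by_contra hc
      push_neg at hc
      have := mIdx_spec h₂ hgt₂ n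
      have := hs₂.monotone hc
      omega
    by_contra hc
    push_neg at hc
    have : mIdx h₁ n ≤ k := mIdx_le h₁ (by omega)
    omega
end

section
/- If F ⊆ ω^↑ω is a nonempty family with a countable upper bound, then d(F) ≥ 𝔟. -/
open Filter Set

/-- Auxiliary: pointwise minimum of the first `k+1` functions of a sequence. -/
private def minSeq (g : ℕ → ℕ → ℕ) : ℕ → ℕ → ℕ
  | 0 => g 0
  | k+1 => fun n => min (minSeq g k n) (g (k+1) n)

/-- Auxiliary: running maximum of a sequence. -/
private def maxUpTo (q : ℕ → ℕ) : ℕ → ℕ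
  | 0 => q 0
  | n+1 => max (maxUpTo q n) (q (n+1))

/-- Any subfamily of the monotone functions of cardinality below `bNum MonoFam`
is bounded by a single monotone function. -/
private lemma exists_mono_bound (H : Set (ℕ → ℕ)) (hH : H ⊆ MonoFam)
    (hlt : Cardinal.mk H < bNum MonoFam) :
    ∃ φ, Monotone φ ∧ ∀ h ∈ H, LtStar h φ := by
  by_contra hc
  push_neg at hc
  have hub : UnboundedIn H MonoFam := by
    intro f hf
    exact hc f hf
  have hmem : Cardinal.mk ↥H ∈ {c : Cardinal | ∃ H' : Set (ℕ → ℕ),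
      H' ⊆ MonoFam ∧ UnboundedIn H' MonoFam ∧ Cardinal.mk ↥H' = c} :=
    ⟨H, hH, hub, rfl⟩
  exact absurd (csInf_le' hmem) (not_le_of_gt hlt)

/-- Any nonempty family of monotone functions with countable
upper bound has dominating number at least `𝔟`. -/
theorem countable_upper_bound_dominating_ge_b (F : Set (ℕ → ℕ))
    (hF : F ⊆ MonoFam) (hne : F.Nonempty) (hub : CountableUpperBound F) :
    bNum MonoFam ≤ dNum F := by
  by_contra hcon
  push_neg at hcon
  obtain ⟨G, hGc, hGsub, hnop⟩ := hub
  -- a dominating family attaining `dNum F`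
  have hdset : {c : Cardinal | ∃ H : Set (ℕ → ℕ), H ⊆ F ∧ DominatesIn H F ∧
      Cardinal.mk H = c}.Nonempty := by
    refine ⟨Cardinal.mk ↥F, F, subset_rfl, ?_, rfl⟩
    intro f hf
    exact ⟨f, hf, Filter.Eventually.of_forall (fun n => le_rfl)⟩
  obtain ⟨D, hDF, hdom, hDcard⟩ := csInf_mem hdset
  rcases G.eq_empty_or_nonempty with hGe | hGne
  · -- easy case: `G = ∅`
    obtain ⟨φ, hφm, hφ⟩ := exists_mono_bound D (hDF.trans hF)
      (by rw [hDcard]; exact hcon)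
    apply hnop
    refine ⟨fun n => φ n + n, ?_, ?_, ?_⟩
    · intro a b hab; exact add_le_add (hφm hab) hab
    · intro f hf N
      obtain ⟨d, hdD, hfd⟩ := hdom f hf
      have hfd' : ∀ᶠ n in atTop, f n ≤ d n := hfd
      have hdφ : ∀ᶠ n in atTop, d n < φ n := hφ d hdD
      filter_upwards [hfd', hdφ, Filter.eventually_ge_atTop N] with n h1 h2 h3
      omega
    · intro g hg; rw [hGe] at hg; exact absurd hg (Set.notMem_empty g)
  · -- main case: `G` nonempty, enumerate it
    obtain ⟨g, rfl⟩ := hGc.exists_eq_range hGne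
    set G' := minSeq g with hG'def
    have hgmono : ∀ k, Monotone (g k) := fun k => (hGsub (Set.mem_range_self k)).1
    have hG'mono : ∀ k, Monotone (G' k) := by
      intro k; induction k with
      | zero => exact hgmono 0
      | succ k ih => intro a b hab; exact min_le_min (ih hab) (hgmono (k+1) hab)
    have hG'le : ∀ k n, G' k n ≤ g k n := by
      intro k n; cases k with
      | zero => exact le_refl _
      | succ k => exact min_le_right _ _
    have hG'succ : ∀ k n, G' (k+1) n ≤ G' k n := fun k n => min_le_left _ _
    have hG'anti : ∀ j k, j ≤ k → ∀ n, G' k n ≤ G' j n := by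
      intro j k hjk
      induction k with
      | zero =>
        have : j = 0 := Nat.le_zero.mp hjk
        subst this; intro n; exact le_refl _
      | succ k ih =>
        rcases Nat.lt_or_ge j (k+1) with hlt' | hge
        · intro n; exact (hG'succ k n).trans (ih (Nat.lt_succ_iff.mp hlt') n)
        · have : j = k+1 := le_antisymm hjk hge
          subst this; intro n; exact le_refl _
    have hprecg : ∀ f ∈ F, ∀ k, Prec f (g k) :=
      fun f hf k => (hGsub (Set.mem_range_self k)).2 f hf
    have hprec : ∀ f ∈ F, ∀ k, Prec f (G' k) := by
      intro f hf k
      induction k with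
      | zero => exact hprecg f hf 0
      | succ k ih =>
        intro N
        filter_upwards [ih N, hprecg f hf (k+1) N] with n h1 h2
        exact le_min h1 h2
    -- threshold functions
    have hSne : ∀ d ∈ F, ∀ k : ℕ,
        {n : ℕ | ∀ m, n ≤ m → d m + 2*k ≤ G' k m}.Nonempty := by
      intro d hd k
      obtain ⟨n₀, hn₀⟩ := Filter.eventually_atTop.mp (hprec d hd k (2*k))
      exact ⟨n₀, fun m hm => hn₀ m hm⟩
    set h : (ℕ → ℕ) → ℕ → ℕ :=
      fun d k => sInf {n : ℕ | ∀ m, n ≤ m → d m + 2*k ≤ G' k m} with hhdef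
    have hspec : ∀ d ∈ D, ∀ k, ∀ m, h d k ≤ m → d m + 2*k ≤ G' k m := by
      intro d hd k
      have := Nat.sInf_mem (hSne d (hDF hd) k)
      exact fun m hm => this m hm
    have hmonoh : ∀ d ∈ D, Monotone (h d) := by
      intro d hd
      apply monotone_nat_of_le_succ
      intro k
      apply Nat.sInf_le
      intro m hm
      have h1 := Nat.sInf_mem (hSne d (hDF hd) (k+1)) m hm
      have h2 := hG'succ k m
      omega
    -- the image family is small, hence bounded
    have hHsub : h '' D ⊆ MonoFam := by
      rintro _ ⟨d, hd, rfl⟩; exact hmonoh d hd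
    have hcard : Cardinal.mk ↥(h '' D) < bNum MonoFam :=
      lt_of_le_of_lt (le_of_le_of_eq Cardinal.mk_image_le hDcard) hcon
    obtain ⟨φ, hφm, hφ⟩ := exists_mono_bound _ hHsub hcard
    have hφd : ∀ d ∈ D, ∀ᶠ k in atTop, h d k < φ k :=
      fun d hd => hφ (h d) ⟨d, hd, rfl⟩
    -- the level function
    have hKne : ∀ n : ℕ, {k : ℕ | n < φ k + k}.Nonempty := by
      intro n
      refine ⟨n+1, ?_⟩
      have : (0:ℕ) ≤ φ (n+1) := Nat.zero_le _
      simp only [Set.mem_setOf_eq]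
      omega
    set K : ℕ → ℕ := fun n => sInf {k : ℕ | n < φ k + k} with hKdef
    have hKspec : ∀ n, n < φ (K n) + K n := fun n => Nat.sInf_mem (hKne n)
    have hKlow : ∀ n k, k < K n → φ k + k ≤ n := by
      intro n k hk
      by_contra hle
      push_neg at hle
      have hmem : k ∈ {k : ℕ | n < φ k + k} := hle
      exact absurd (Nat.sInf_le hmem) (Nat.not_le_of_lt hk)
    have hKbig : ∀ M n, φ M + M ≤ n → M < K n := by
      intro M n hn
      by_contra hle
      push_neg at hle
      have h1 := hKspec n
      have h2 : φ (K n) ≤ φ M := hφm hle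
      omega
    set L : ℕ → ℕ := fun n => K n - 1 with hLdef
    have hLbig : ∀ M : ℕ, ∀ᶠ n in atTop, M ≤ L n := by
      intro M
      filter_upwards [Filter.eventually_ge_atTop (φ (M+1) + (M+1))] with n hn
      have := hKbig (M+1) n hn
      simp only [hLdef]
      omega
    have hLspec : ∀ n, 1 ≤ L n → φ (L n) + L n ≤ n := by
      intro n h1
      refine hKlow n (L n) ?_
      simp only [hLdef] at h1 ⊢
      omega
    -- the interpolating function
    set p₀ : ℕ → ℕ := fun n => G' (L n) n - L n with hp₀def
    set p : ℕ → ℕ := maxUpTo p₀ with hpdef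
    have hple : ∀ n, p₀ n ≤ p n := by
      intro n; cases n with
      | zero => exact le_refl _
      | succ n => exact le_max_right _ _
    have hpmono : Monotone p := by
      apply monotone_nat_of_le_succ
      intro n
      exact le_max_left _ _
    have hpsucc : ∀ n, p (n+1) = max (p n) (p₀ (n+1)) := fun n => rfl
    -- `f ≺ p` for all `f ∈ F`
    have hfp : ∀ f ∈ F, Prec f p := by
      intro f hf N
      obtain ⟨d, hdD, hfd⟩ := hdom f hf
      have hfd' : ∀ᶠ n in atTop, f n ≤ d n := hfd
      obtain ⟨k₀, hk₀⟩ := Filter.eventually_atTop.mp (hφd d hdD)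
      filter_upwards [hfd', hLbig (k₀ + N + 1)] with n h1 h2
      have h3 : φ (L n) + L n ≤ n := hLspec n (by omega)
      have h4 : h d (L n) < φ (L n) := hk₀ (L n) (by omega)
      have h5 : d n + 2 * L n ≤ G' (L n) n := hspec d hdD (L n) n (by omega)
      have h6 := hple n
      have h7 : p₀ n = G' (L n) n - L n := rfl
      omega
    -- `p ≺ g j` for every `j`
    have hpg : ∀ j, Prec p (g j) := by
      intro j N
      obtain ⟨f₀, hf₀⟩ := hne
      obtain ⟨n₁, hn₁⟩ := Filter.eventually_atTop.mp (hLbig (j + N))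
      have claim : ∀ m, n₁ ≤ m → p₀ m + N ≤ max (G' j m) N := by
        intro m hm
        have h2 : j + N ≤ L m := hn₁ m hm
        have h3 : G' (L m) m ≤ G' j m := hG'anti j (L m) (by omega) m
        have h7 : p₀ m = G' (L m) m - L m := rfl
        omega
      have step : ∀ n, n₁ ≤ n → p n + N ≤ max (p n₁ + N) (max (G' j n) N) := by
        intro n hn
        induction n, hn using Nat.le_induction with
        | base => exact le_max_left _ _
        | succ n hn ih =>
          have hmax := hpsucc n
          have hc := claim (n+1) (by omega)
          have hmono : G' j n ≤ G' j (n+1) := hG'mono j (Nat.le_succ n)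
          omega
      have hgrow := Filter.eventually_atTop.mp (hprec f₀ hf₀ j (p n₁ + N + N))
      obtain ⟨n₂, hn₂⟩ := hgrow
      filter_upwards [Filter.eventually_ge_atTop n₁, Filter.eventually_ge_atTop n₂]
        with n hn hn'
      have h1 := step n hn
      have h2 := hn₂ n hn'
      have h3 : G' j n ≤ g j n := hG'le j n
      omega
    apply hnop
    refine ⟨p, hpmono, hfp, ?_⟩
    rintro gg ⟨j, rfl⟩
    exact hpg j
end

section
/- (Lusin-type gap) Suppose ⟨f_α : α < ω₁⟩ and ⟨g_α : α < ω₁⟩ are families in ω^↑ω satisfying: (1) for all α < β < ω₁, f_α + id ≺ g_β and g_β ≺ g_α, where id(n) = n; (2) for all α < ω₁ and all n, f_α(n) ≤ g_α(n); (3) for all α < β < ω₁ there exists n with f_α(n) > g_β(n). Then there is no h ∈ ω^↑ω such that f_α ≺ h and h ≺ g_α for all α < ω₁. -/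
open Filter Set

/-- Lusin-type gap: families `⟨f_α⟩, ⟨g_α⟩ (α < ω₁)` satisfying
the Lusin conditions form a gap. -/
theorem lusin_gap (f g : Ordinal → ℕ → ℕ)
    (hmono : ∀ α < (Cardinal.aleph 1).ord, Monotone (f α) ∧ Monotone (g α))
    (h1 : ∀ α β : Ordinal, α < β → β < (Cardinal.aleph 1).ord →
      Prec (fun n => f α n + n) (g β) ∧ Prec (g β) (g α))
    (h2 : ∀ α < (Cardinal.aleph 1).ord, ∀ n, f α n ≤ g α n)
    (h3 : ∀ α β : Ordinal, α < β → β < (Cardinal.aleph 1).ord →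
      ∃ n, g β n < f α n) :
    ¬ ∃ h : ℕ → ℕ, Monotone h ∧
      ∀ α < (Cardinal.aleph 1).ord, Prec (f α) h ∧ Prec h (g α) := by
  rintro ⟨h, hhm, hh⟩
  set Ω := (Cardinal.aleph 1).ord with hΩ
  have key : ∀ α : Set.Iio Ω, ∃ N : ℕ, ∀ n ≥ N, f α.1 n ≤ h n ∧ h n ≤ g α.1 n := by
    rintro ⟨α, hα⟩
    obtain ⟨hf, hg⟩ := hh α hα
    have e := (hf 0).and (hg 0)
    rw [Filter.eventually_atTop] at e
    obtain ⟨a, ha⟩ := e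
    exact ⟨a, fun n hn => ⟨by simpa using (ha n hn).1, by simpa using (ha n hn).2⟩⟩
  choose N hN using key
  set φ : Set.Iio Ω → List ℕ := fun α => List.ofFn (fun k : Fin (N α) => g α.1 k)
    with hφdef
  have main : ∀ a b : Set.Iio Ω, a.1 < b.1 → φ a = φ b → False := by
    intro a b hab hφ
    have hNab : N a = N b := by
      have := congrArg List.length hφ
      simpa [hφdef] using this
    have hgeq : ∀ k, k < N a → g a.1 k = g b.1 k := by
      intro k hk
      have hk1 : k < (φ a).length := by simpa [hφdef] using hk
      have hk2 : k < (φ b).length := by simpa [hφdef, ← hNab] using hk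
      have h1 : (φ a)[k]'hk1 = g a.1 k := by simp [hφdef]
      have h2 : (φ b)[k]'hk2 = g b.1 k := by simp [hφdef]
      rw [← h1, ← h2]
      simp only [hφ]
    obtain ⟨n, hn⟩ := h3 a.1 b.1 hab b.2
    rcases le_or_gt (N a) n with hna | hna
    · have h1 := (hN a n hna).1
      have h2 := (hN b n (hNab ▸ hna)).2
      omega
    · have h1 := hgeq n hna
      have h2 := h2 a.1 a.2 n
      omega
  have hninj : ¬ Function.Injective φ := by
    intro hinj
    have hc : Countable (Set.Iio Ω) := hinj.countable
    have h1 : Cardinal.mk (Set.Iio Ω) ≤ Cardinal.aleph0 := Cardinal.mk_le_aleph0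
    rw [Ordinal.mk_Iio_ordinal, hΩ, Cardinal.card_ord,
      ← Cardinal.lift_aleph0.{u_1 + 1, u_1}, Cardinal.lift_le] at h1
    exact absurd h1 (not_le.mpr (by simpa using Cardinal.aleph0_lt_aleph_one))
  rw [Function.not_injective_iff] at hninj
  obtain ⟨a, b, hab, hne⟩ := hninj
  rcases lt_or_gt_of_ne (fun hx => hne (Subtype.ext hx)) with hlt | hlt
  · exact main a b hlt hab
  · exact main b a hlt hab.symm
end

section
/- For each λ ∈ {1, 2, ℵ₀} and each cardinal κ with ℵ₁ ≤ κ ≤ 𝔠, there is a downward-closed family F ⊆ ω^↑ω such that b(F) = λ, d(F) = κ, and F has upper bound at most ω₁: there exists H ⊆ F↓ of cardinality at most ℵ₁ such that no g ∈ F↓ satisfies g ≺ h for all h ∈ H. -/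
open Filter Set

/-!
`F` is the downward closure of generators `n ↦ scale d + m n + k`, where `scale n = (n + 1)!` and
`d` is the last point `≤ n` of a finite union of members of an almost disjoint family `B` of size
`κ`. The increments of `scale` outgrow every linear function, so a generator falls below `scale n`
at all large `n` outside its union, while `scaleOn (B i)` equals `scale` on `B i`. Hence
`scaleOn (B i)` is dominated only by generators whose union contains `B i`, which gives
`d(F) = κ`; allowing only `(s, m, k) = ({i}, 0, 0)`, only `({i}, 0, k)`, or all `(s, m, k)` gives
`b(F) = 1, 2, ℵ₀`.

For the upper bound, `ω₁` members of `B` are the floors of a Luzin gap. The functions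
`n ↦ scale (next (n, ceil w))` lie in `F↓`, and a `g ∈ F↓` below all of them would satisfy
`scale ≤ g` almost everywhere on every floor and `g < scale` almost everywhere on every ceiling,
separating the gap.
-/

open Function Cardinal
open scoped Ordinal

def AlmostDisjoint {α : Type*} (s t : Set α) : Prop := (s ∩ t).Finite

lemma AlmostDisjoint.symm {α : Type*} {s t : Set α} (h : AlmostDisjoint s t) :
    AlmostDisjoint t s := by
  rwa [AlmostDisjoint, inter_comm]

lemma AlmostDisjoint.infinite_sdiff {α : Type*} {D E : Set α} (h : AlmostDisjoint D E)
    (hE : E.Infinite) :    (E \ D).Infinite := by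
  simpa [sdiff_inter_self_eq_sdiff] using hE.sdiff h

lemma almostDisjoint_biUnion {α ι : Type*} {B : ι → Set α} {C : Set α} {s : Finset ι}
    (h : ∀ i ∈ s, AlmostDisjoint (B i) C) : AlmostDisjoint (⋃ i ∈ s, B i) C := by
  rw [AlmostDisjoint, iUnion₂_inter]
  exact s.finite_toSet.biUnion h

lemma injective_of_pairwise_almostDisjoint {α ι : Type*} {B : ι → Set α}
    (hinf : ∀ i, (B i).Infinite) (had : Pairwise (AlmostDisjoint on B)) : Injective B := by
  intro i j h
  by_contra hij
  exact hinf j (by simpa [AlmostDisjoint, h] using had hij)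

lemma almostDisjoint_of_subset_even_of_subset_odd {A A' : Set ℕ} (hA : A ⊆ {n | Even n})
    (hA' : A' ⊆ {n | Odd n}) : AlmostDisjoint A A' :=
  finite_empty.subset fun _ hn => Nat.not_even_iff_odd.2 (hA' hn.2) (hA hn.1)

lemma LeStar.trans {f g h : ℕ → ℕ} (h₁ : LeStar f g) (h₂ : LeStar g h) : LeStar f h :=
  (h₁.and h₂).mono fun _ h => h.1.trans h.2

lemma LeStar.trans_ltStar {f g h : ℕ → ℕ} (h₁ : LeStar f g) (h₂ : LtStar g h) :
    LtStar f h :=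
  (h₁.and h₂).mono fun _ h => h.1.trans_lt h.2

lemma LtStar.trans {f g h : ℕ → ℕ} (h₁ : LtStar f g) (h₂ : LtStar g h) : LtStar f h :=
  (h₁.and h₂).mono fun _ h => h.1.trans h.2

lemma LeStar.trans_prec {f g h : ℕ → ℕ} (h₁ : LeStar f g) (h₂ : Prec g h) : Prec f h :=
  fun N => (h₁.and (h₂ N)).mono fun _ h => (Nat.add_le_add_right h.1 N).trans h.2

lemma LeStar.not_ltStar {f g h : ℕ → ℕ} (hfg : LeStar f g)
    (hgh : ∃ᶠ n in atTop, g n ≤ h n) :    ¬ LtStar h f := fun hhf => by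
  obtain ⟨n, h₁, h₂, h₃⟩ := (hgh.and_eventually (hfg.and hhf)).exists
  omega

section Scale

def scale (n : ℕ) : ℕ := (n + 1).factorial

lemma scale_mono : Monotone scale := fun _ _ h => Nat.factorial_le (by omega)

lemma scale_sub_one_add_le {C n : ℕ} (hn : 2 * C + 1 ≤ n) :
    scale (n - 1) + C * (n + 1) ≤ scale n := by
  obtain ⟨m, rfl⟩ : ∃ m, n = m + 1 := ⟨n - 1, by omega⟩
  have h : m + 1 ≤ (m + 1).factorial := Nat.self_le_factorial _
  simp only [scale, Nat.add_sub_cancel, Nat.factorial_succ (m + 1)]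
  nlinarith

open scoped Classical in
noncomputable def scaleOn (D : Set ℕ) (n : ℕ) : ℕ := scale (Nat.findGreatest (· ∈ D) n)

noncomputable def scaleOnLin (D : Set ℕ) (m k n : ℕ) : ℕ := scaleOn D n + m * n + k

noncomputable def scaleNext (C : Set ℕ) (n : ℕ) : ℕ := scale (nextIn n C)

section
open scoped Classical

lemma scaleOn_mono (D : Set ℕ) : Monotone (scaleOn D) :=
  fun _ _ h => scale_mono (Nat.findGreatest_mono_right _ h)

lemma scaleOn_le_scaleOn {D E : Set ℕ} (h : D ⊆ E) (n : ℕ) : scaleOn D n ≤ scaleOn E n :=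
  scale_mono (Nat.findGreatest_mono_left (fun _ hm => h hm) n)

lemma scaleOn_le_scale (D : Set ℕ) (n : ℕ) : scaleOn D n ≤ scale n :=
  scale_mono (Nat.findGreatest_le n)

lemma scaleOn_of_mem {D : Set ℕ} {n : ℕ} (h : n ∈ D) : scaleOn D n = scale n := by
  rw [scaleOn, Nat.findGreatest_eq h]

lemma scaleOn_le_of_notMem {D : Set ℕ} {n : ℕ} (h : n ∉ D) :
    scaleOn D n ≤ scale (n - 1) := by
  cases n with
  | zero => exact scaleOn_le_scale D 0
  | succ n =>
    rw [scaleOn, Nat.findGreatest_of_not h]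
    exact scale_mono (Nat.findGreatest_le n)

end

lemma scaleOnLin_zero_zero (D : Set ℕ) : scaleOnLin D 0 0 = scaleOn D := by
  funext n
  simp [scaleOnLin]

lemma scaleOnLin_mono (D : Set ℕ) (m k : ℕ) : Monotone (scaleOnLin D m k) := fun a b h => by
  have := scaleOn_mono D h
  have := Nat.mul_le_mul_left m h
  simp only [scaleOnLin]
  omega

lemma scaleOnLin_le_scaleOnLin {D E : Set ℕ} {m m' k k' : ℕ} (hD : D ⊆ E) (hm : m ≤ m')
    (hk : k ≤ k') (n : ℕ) : scaleOnLin D m k n ≤ scaleOnLin E m' k' n := by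
  have := scaleOn_le_scaleOn hD n
  have := Nat.mul_le_mul_right n hm
  simp only [scaleOnLin]
  omega

lemma scaleOnLin_lt_of_pos (D : Set ℕ) (m k : ℕ) {n : ℕ} (hn : 0 < n) :
    scaleOnLin D m k n < scaleOnLin D (m + k + 1) 0 n := by
  simp only [scaleOnLin]
  nlinarith

lemma eventually_scaleOnLin_lt_scale (D : Set ℕ) (m k : ℕ) :
    ∀ᶠ n in atTop, n ∉ D → scaleOnLin D m k n < scale n := by
  filter_upwards [eventually_ge_atTop (2 * (m + k + 1) + 1)] with n hn hD
  have h₁ := scaleOn_le_of_notMem hD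
  have h₂ := scale_sub_one_add_le hn
  have h₃ : m * n + k < (m + k + 1) * (n + 1) := by nlinarith
  simp only [scaleOnLin]
  omega

lemma frequently_scaleOnLin_lt_scaleOn {D E : Set ℕ} (h : (E \ D).Infinite) (m k : ℕ) :
    ∃ᶠ n in atTop, scaleOnLin D m k n < scaleOn E n := by
  refine ((Nat.frequently_atTop_iff_infinite.2 h).and_eventually
    (eventually_scaleOnLin_lt_scale D m k)).mono ?_
  rintro n ⟨⟨hE, hD⟩, hlt⟩
  rw [scaleOn_of_mem hE]
  exact hlt hD

lemma frequently_scaleOnLin_le {E : Set ℕ} (hE : E.Infinite) (D : Set ℕ) (m k : ℕ) :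
    ∃ᶠ n in atTop, scaleOnLin D m k n ≤ scaleOnLin E (m + k) 0 n := by
  refine ((Nat.frequently_atTop_iff_infinite.2 hE).and_eventually
    (eventually_gt_atTop 0)).mono ?_
  rintro n ⟨hn, hpos⟩
  have := scaleOn_le_scale D n
  have := Nat.le_mul_of_pos_right k hpos
  simp only [scaleOnLin, scaleOn_of_mem hn, add_mul]
  omega

lemma nextIn_spec {C : Set ℕ} (hC : C.Infinite) (n : ℕ) :
    nextIn n C ∈ C ∧ n ≤ nextIn n C :=
  have ⟨c, hc, hnc⟩ := hC.exists_gt n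
  Nat.sInf_mem (s := {x | x ∈ C ∧ n ≤ x}) ⟨c, hc, hnc.le⟩

lemma nextIn_of_mem {C : Set ℕ} {n : ℕ} (h : n ∈ C) : nextIn n C = n :=
  le_antisymm (Nat.sInf_le ⟨h, le_rfl⟩)
    (Nat.sInf_mem (s := {x | x ∈ C ∧ n ≤ x}) ⟨n, h, le_rfl⟩).2

lemma scaleNext_mono {C : Set ℕ} (hC : C.Infinite) : Monotone (scaleNext C) := fun _ b h =>
  scale_mono (Nat.sInf_le ⟨(nextIn_spec hC b).1, h.trans (nextIn_spec hC b).2⟩)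

lemma prec_scaleOnLin_scaleNext {C D : Set ℕ} (hC : C.Infinite) (hDC : AlmostDisjoint D C)
    (m k : ℕ) : Prec (scaleOnLin D m k) (scaleNext C) := by
  intro N
  have hcof : ∀ᶠ c in atTop, c ∉ D ∩ C := by
    simpa [Nat.cofinite_eq_atTop] using hDC.eventually_cofinite_notMem
  obtain ⟨a, ha⟩ := eventually_atTop.1 ((eventually_scaleOnLin_lt_scale D m (k + N)).and hcof)
  filter_upwards [eventually_ge_atTop a] with n hn
  obtain ⟨hcC, hnc⟩ := nextIn_spec hC n
  obtain ⟨hlt, hcD⟩ := ha _ (hn.trans hnc)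
  calc scaleOnLin D m k n + N = scaleOnLin D m (k + N) n := by simp only [scaleOnLin]; omega
    _ ≤ scaleOnLin D m (k + N) (nextIn n C) := scaleOnLin_mono D m (k + N) hnc
    _ ≤ scaleNext C n := (hlt fun hcD' => hcD ⟨hcD', hcC⟩).le

lemma eventually_scale_le_of_prec {E : Set ℕ} {g : ℕ → ℕ} (h : Prec (scaleOn E) g) :
    ∀ᶠ n in atTop, n ∈ E → scale n ≤ g n :=
  (h 0).mono fun n hn hE => by simpa [scaleOn_of_mem hE] using hn

lemma eventually_lt_scale_of_prec {C : Set ℕ} {g : ℕ → ℕ} (h : Prec g (scaleNext C)) :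
    ∀ᶠ n in atTop, n ∈ C → g n < scale n :=
  (h 1).mono fun n hn hC => by simpa [scaleNext, nextIn_of_mem hC] using hn

end Scale

section CardinalInvariants

def downClosure (G : Set (ℕ → ℕ)) : Set (ℕ → ℕ) :=
  {f | Monotone f ∧ ∃ g ∈ G, LeStar f g}

lemma downClosure_subset_monoFam (G : Set (ℕ → ℕ)) : downClosure G ⊆ MonoFam :=
  fun _ hf => hf.1

lemma downwardClosed_downClosure (G : Set (ℕ → ℕ)) : DownwardClosed (downClosure G) := by
  rintro f hf g ⟨-, g', hg', hgg'⟩ hfg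
  exact ⟨hf, g', hg', hfg.trans hgg'⟩

lemma dominatesIn_downClosure (G : Set (ℕ → ℕ)) : DominatesIn G (downClosure G) :=
  fun _ ⟨_, g, hg, hle⟩ => ⟨g, hg, hle⟩

lemma subset_downClosure {G : Set (ℕ → ℕ)} (hG : ∀ g ∈ G, Monotone g) :
    G ⊆ downClosure G :=
  fun g hg => ⟨hG g hg, g, hg, Eventually.of_forall fun _ => le_rfl⟩

theorem bNum_eq {F H : Set (ℕ → ℕ)} {c : Cardinal} (hHF : H ⊆ F) (hH : UnboundedIn H F)
    (hc : #H ≤ c) (hbdd : ∀ H' ⊆ F, #H' < c → ∃ f ∈ F, ∀ h ∈ H', LtStar h f) :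
    bNum F = c := by
  have hlow : ∀ H' ⊆ F, UnboundedIn H' F → c ≤ #H' := by
    intro H' hH'F hH'
    by_contra! hlt
    obtain ⟨f, hf, hbd⟩ := hbdd H' hH'F hlt
    obtain ⟨h, hh, hnot⟩ := hH' f hf
    exact hnot (hbd h hh)
  refine IsLeast.csInf_eq ⟨⟨H, hHF, hH, le_antisymm hc (hlow H hHF hH)⟩, ?_⟩
  rintro _ ⟨H', hH'F, hH', rfl⟩
  exact hlow H' hH'F hH'

theorem dNum_eq {F H : Set (ℕ → ℕ)} {c : Cardinal} (hHF : H ⊆ F) (hH : DominatesIn H F)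
    (hc : #H ≤ c) (hlow : ∀ H' ⊆ F, DominatesIn H' F → c ≤ #H') : dNum F = c := by
  refine IsLeast.csInf_eq ⟨⟨H, hHF, hH, le_antisymm hc (hlow H hHF hH)⟩, ?_⟩
  rintro _ ⟨H', hH'F, hH', rfl⟩
  exact hlow H' hH'F hH'

lemma exists_ltStar_bound_of_finite {F H : Set (ℕ → ℕ)} (hne : F.Nonempty)
    (hdir : ∀ f₁ ∈ F, ∀ f₂ ∈ F, ∃ f ∈ F, LtStar f₁ f ∧ LtStar f₂ f)
    (hH : H.Finite) (hHF : H ⊆ F) : ∃ f ∈ F, ∀ h ∈ H, LtStar h f := by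
  induction H, hH using Set.Finite.induction_on with
  | empty => exact ⟨hne.some, hne.some_mem, by simp⟩
  | @insert a H _ _ ih =>
    obtain ⟨f, hf, hHf⟩ := ih ((subset_insert a H).trans hHF)
    obtain ⟨f', hf', haf', hff'⟩ := hdir a (hHF (mem_insert a H)) f hf
    exact ⟨f', hf', forall_mem_insert.2 ⟨haf', fun h hh => (hHf h hh).trans hff'⟩⟩

lemma exists_ltStar_bound_of_mk_lt_two {F H : Set (ℕ → ℕ)} (hne : F.Nonempty)
    (hstep : ∀ f ∈ F, ∃ f' ∈ F, LtStar f f') (hH : #H < 2) (hHF : H ⊆ F) :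
    ∃ f ∈ F, ∀ h ∈ H, LtStar h f := by
  have hsub : H.Subsingleton := fun a ha b hb => by
    by_contra hab
    exact hH.not_ge (two_le_iff.2 ⟨⟨a, ha⟩, ⟨b, hb⟩, by simpa using hab⟩)
  rcases hsub.eq_empty_or_singleton with rfl | ⟨h, rfl⟩
  · exact ⟨hne.some, hne.some_mem, by simp⟩
  · obtain ⟨f, hf, hhf⟩ := hstep h (hHF rfl)
    exact ⟨f, hf, forall_eq.2 hhf⟩

end CardinalInvariants

section GeneratedFamily

variable {ι : Type} (B : ι → Set ℕ)

noncomputable def generator (p : Finset ι × ℕ × ℕ) : ℕ → ℕ :=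
  scaleOnLin (⋃ i ∈ p.1, B i) p.2.1 p.2.2

def genFamily (P : Set (Finset ι × ℕ × ℕ)) : Set (ℕ → ℕ) :=
  downClosure (generator B '' P)

variable {B} {P : Set (Finset ι × ℕ × ℕ)}

lemma generator_singleton (i : ι) (m k : ℕ) :
    generator B ({i}, m, k) = scaleOnLin (B i) m k := by
  simp [generator]

lemma generator_mem {p : Finset ι × ℕ × ℕ} (hp : p ∈ P) : generator B p ∈ genFamily B P :=
  subset_downClosure (by rintro _ ⟨q, -, rfl⟩; exact scaleOnLin_mono _ _ _)
    (mem_image_of_mem _ hp)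

lemma scaleOnLin_mem_genFamily {i : ι} {m k : ℕ} (hP : ({i}, m, k) ∈ P) :
    scaleOnLin (B i) m k ∈ genFamily B P :=
  generator_singleton (B := B) i m k ▸ generator_mem hP

lemma scaleOn_mem_genFamily {i : ι} (hP : ({i}, 0, 0) ∈ P) : scaleOn (B i) ∈ genFamily B P :=
  scaleOnLin_zero_zero (B i) ▸ scaleOnLin_mem_genFamily hP

lemma exists_generator_of_mem {f : ℕ → ℕ} (hf : f ∈ genFamily B P) :
    ∃ p ∈ P, LeStar f (generator B p) := by
  obtain ⟨-, _, ⟨p, hp, rfl⟩, hle⟩ := hf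
  exact ⟨p, hp, hle⟩

lemma generator_ltStar_generator {s s' : Finset ι} {m m' k : ℕ} (hs : s ⊆ s')
    (hm : m + k < m') :
    LtStar (generator B (s, m, k)) (generator B (s', m', 0)) := by
  filter_upwards [eventually_gt_atTop 0] with n hn
  calc generator B (s, m, k) n ≤ scaleOnLin (⋃ i ∈ s', B i) m k n :=
        scaleOnLin_le_scaleOnLin (biUnion_subset_biUnion_left (Finset.coe_subset.2 hs))
          le_rfl le_rfl n
    _ < scaleOnLin (⋃ i ∈ s', B i) (m + k + 1) 0 n := scaleOnLin_lt_of_pos _ m k hn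
    _ ≤ generator B (s', m', 0) n := scaleOnLin_le_scaleOnLin subset_rfl hm le_rfl n

lemma frequently_generator_lt_scaleOn (hinf : ∀ i, (B i).Infinite)
    (had : Pairwise (AlmostDisjoint on B)) {i : ι} {p : Finset ι × ℕ × ℕ} (hi : i ∉ p.1) :
    ∃ᶠ n in atTop, generator B p n < scaleOn (B i) n :=
  frequently_scaleOnLin_lt_scaleOn ((almostDisjoint_biUnion fun _ hj =>
    had (ne_of_mem_of_not_mem hj hi)).infinite_sdiff (hinf i)) p.2.1 p.2.2

lemma mem_of_scaleOn_leStar_generator (hinf : ∀ i, (B i).Infinite)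
    (had : Pairwise (AlmostDisjoint on B)) {i : ι} {p : Finset ι × ℕ × ℕ}
    (h : LeStar (scaleOn (B i)) (generator B p)) : i ∈ p.1 := by
  by_contra hi
  obtain ⟨n, hlt, hle⟩ :=
    ((frequently_generator_lt_scaleOn hinf had hi).and_eventually h).exists
  exact (hlt.trans_le hle).false

lemma mk_le_mk_mul_aleph0_of_dominatesIn (hinf : ∀ i, (B i).Infinite)
    (had : Pairwise (AlmostDisjoint on B)) (hP : ∀ i, ({i}, 0, 0) ∈ P) {H : Set (ℕ → ℕ)}
    (hHF : H ⊆ genFamily B P) (hH : DominatesIn H (genFamily B P)) : #ι ≤ #H * ℵ₀ := by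
  choose p _ hp using fun h : H => exists_generator_of_mem (hHF h.2)
  choose u hu hle using fun i => hH _ (scaleOn_mem_genFamily (B := B) (hP i))
  refine mk_le_mk_mul_of_mk_preimage_le (fun i => (⟨u i, hu i⟩ : H)) fun h => ?_
  have hsub : (fun i => (⟨u i, hu i⟩ : H)) ⁻¹' {h} ⊆ ((p h).1 : Set ι) := by
    rintro i rfl
    exact mem_of_scaleOn_leStar_generator hinf had ((hle i).trans (hp ⟨u i, hu i⟩))
  exact ((p h).1.finite_toSet.subset hsub).countable.le_aleph0

theorem dNum_genFamily (hinf : ∀ i, (B i).Infinite) (had : Pairwise (AlmostDisjoint on B))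
    (hι : ℵ₀ < #ι) (hP : ∀ i, ({i}, 0, 0) ∈ P) : dNum (genFamily B P) = #ι := by
  have : Infinite ι := Cardinal.infinite_iff.2 hι.le
  refine dNum_eq (subset_downClosure ?_) (dominatesIn_downClosure _) ?_ fun H hHF hH => ?_
  · rintro _ ⟨p, -, rfl⟩
    exact scaleOnLin_mono _ _ _
  · calc #(generator B '' P) ≤ #P := mk_image_le
      _ ≤ #(Finset ι × ℕ × ℕ) := mk_set_le P
      _ = #ι := by simp [mk_finset_of_infinite, mul_eq_left hι.le hι.le aleph0_ne_zero]
  · by_contra! hlt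
    exact (mul_lt_of_lt hι.le hlt hι).not_ge
      (mk_le_mk_mul_aleph0_of_dominatesIn hinf had hP hHF hH)

lemma scaleNext_mem_fDown_genFamily {C : Set ℕ} (hC : C.Infinite)
    (hBC : ∀ i, AlmostDisjoint (B i) C) : scaleNext C ∈ FDown (genFamily B P) := by
  refine ⟨scaleNext_mono hC, fun f hf => ?_⟩
  obtain ⟨p, -, hle⟩ := exists_generator_of_mem hf
  exact hle.trans_prec (prec_scaleOnLin_scaleNext hC (almostDisjoint_biUnion fun i _ => hBC i) _ _)

theorem bNum_genFamily_singletons [Nonempty ι] (hinf : ∀ i, (B i).Infinite) :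
    bNum (genFamily B (range fun i => ({i}, 0, 0))) = 1 := by
  obtain ⟨i₀⟩ := ‹Nonempty ι›
  have hmem : scaleOn (B i₀) ∈ genFamily B (range fun i => ({i}, 0, 0)) :=
    scaleOn_mem_genFamily ⟨i₀, rfl⟩
  refine bNum_eq (singleton_subset_iff.2 hmem) (fun f hf => ?_) (mk_singleton _).le
    fun H _ hH => ?_
  · obtain ⟨_, ⟨j, rfl⟩, hle⟩ := exists_generator_of_mem hf
    have hfreq : ∃ᶠ n in atTop, generator B ({j}, 0, 0) n ≤ scaleOn (B i₀) n := by
      simpa [generator_singleton, scaleOnLin_zero_zero] using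
        frequently_scaleOnLin_le (hinf i₀) (B j) 0 0
    exact ⟨_, rfl, hle.not_ltStar hfreq⟩
  · have : H = ∅ := by simpa [mk_set_eq_zero_iff] using hH
    exact ⟨_, hmem, by simp [this]⟩

theorem bNum_genFamily_shifts [Nontrivial ι] (hinf : ∀ i, (B i).Infinite)
    (had : Pairwise (AlmostDisjoint on B)) :
    bNum (genFamily B (range fun q : ι × ℕ => ({q.1}, 0, q.2))) = 2 := by
  obtain ⟨i₀, i₁, hne⟩ := exists_pair_ne ι
  have hmem : ∀ i, scaleOn (B i) ∈ genFamily B (range fun q : ι × ℕ => ({q.1}, 0, q.2)) :=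
    fun i => scaleOn_mem_genFamily ⟨(i, 0), rfl⟩
  refine bNum_eq (H := {scaleOn (B i₀), scaleOn (B i₁)}) (insert_subset (hmem i₀)
    (singleton_subset_iff.2 (hmem i₁))) (fun f hf => ?_) ?_ fun H hHF hH => ?_
  · obtain ⟨_, ⟨⟨j, k⟩, rfl⟩, hle⟩ := exists_generator_of_mem hf
    have key : ∀ i, i ≠ j → ¬ LtStar (scaleOn (B i)) f := fun i hij =>
      hle.not_ltStar ((frequently_generator_lt_scaleOn hinf had
        (by simpa using hij)).mono fun _ h => h.le)
    by_cases hj : j = i₀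
    · exact ⟨_, Or.inr rfl, key i₁ (hj ▸ hne.symm)⟩
    · exact ⟨_, Or.inl rfl, key i₀ (Ne.symm hj)⟩
  · simpa [one_add_one_eq_two] using mk_insert_le (a := scaleOn (B i₀)) (s := {scaleOn (B i₁)})
  · refine exists_ltStar_bound_of_mk_lt_two ⟨_, hmem i₀⟩ (fun h hh => ?_) hH hHF
    obtain ⟨_, ⟨⟨j, k⟩, rfl⟩, hle⟩ := exists_generator_of_mem hh
    refine ⟨_, generator_mem ⟨(j, k + 1), rfl⟩, hle.trans_ltStar ?_⟩
    exact Eventually.of_forall fun n => by simp [generator, scaleOnLin]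

theorem bNum_genFamily_univ [Nonempty ι] (hinf : ∀ i, (B i).Infinite) :
    bNum (genFamily B univ) = ℵ₀ := by
  classical
  obtain ⟨i₀⟩ := ‹Nonempty ι›
  refine bNum_eq (H := range fun M => scaleOnLin (B i₀) M 0)
    (range_subset_iff.2 fun M => scaleOnLin_mem_genFamily trivial) (fun f hf => ?_)
    (countable_range _).le_aleph0 fun H hHF hH => ?_
  · obtain ⟨⟨s, m, k⟩, -, hle⟩ := exists_generator_of_mem hf
    exact ⟨_, ⟨m + k, rfl⟩, hle.not_ltStar (frequently_scaleOnLin_le (hinf i₀) _ m k)⟩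
  · refine exists_ltStar_bound_of_finite ⟨_, generator_mem (mem_univ ({i₀}, 0, 0))⟩ ?_
      (lt_aleph0_iff_set_finite.1 hH) hHF
    intro f₁ hf₁ f₂ hf₂
    obtain ⟨⟨s₁, m₁, k₁⟩, -, h₁⟩ := exists_generator_of_mem hf₁
    obtain ⟨⟨s₂, m₂, k₂⟩, -, h₂⟩ := exists_generator_of_mem hf₂
    exact ⟨_, generator_mem (mem_univ (s₁ ∪ s₂, m₁ + k₁ + m₂ + k₂ + 1, 0)),
      h₁.trans_ltStar (generator_ltStar_generator Finset.subset_union_left (by omega)),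
      h₂.trans_ltStar (generator_ltStar_generator Finset.subset_union_right (by omega))⟩

end GeneratedFamily

section LuzinGap

lemma exists_uncountable_fiber {α : Type*} (hα : ¬ Countable α) (f : α → ℕ) :
    ∃ c, ¬ (f ⁻¹' {c}).Countable := by
  by_contra! h
  exact hα (countable_univ_iff.1 ((countable_iUnion h).mono fun a _ => mem_iUnion.2 ⟨f a, rfl⟩))

variable {W : Type} [LinearOrder W]

lemma exists_forall_le_of_countable (hIio : ∀ w : W, (Iio w).Countable) (hW : ¬ Countable W)
    {T : Set W} (hT : T.Countable) : ∃ b, ∀ t ∈ T, t ≤ b := by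
  by_contra! h
  refine hW (countable_univ_iff.1 ((hT.biUnion fun t _ => hIio t).mono fun w _ => ?_))
  obtain ⟨t, ht, hwt⟩ := h w
  exact mem_biUnion ht hwt

lemma exists_infinite_inter_Iio (hIio : ∀ w : W, (Iio w).Countable) {S T : Set W}
    (hS : ¬ S.Countable) (hT : ¬ T.Countable) : ∃ w ∈ T, (S ∩ Iio w).Infinite := by
  have hSinf : S.Infinite := fun h => hS h.countable
  let e := hSinf.natEmbedding
  obtain ⟨b, hb⟩ := exists_forall_le_of_countable hIio (fun _ => hS S.to_countable)
    (countable_range fun n => (e n : W))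
  obtain ⟨w, hwT, hbw⟩ : ∃ w ∈ T, b < w := by
    by_contra! h
    exact hT (((hIio b).insert b).mono (Iio_insert (a := b) ▸ h))
  refine ⟨w, hwT,
    (infinite_range_of_injective (Subtype.val_injective.comp e.injective)).mono ?_⟩
  rintro _ ⟨n, rfl⟩
  exact ⟨(e n).2, (hb _ ⟨n, rfl⟩).trans_lt hbw⟩

-- The sets are odd so that they stay almost disjoint from the (even) prefix codes.
structure LuzinGap (W : Type*) [LinearOrder W] where
  floor : W → Set ℕ
  ceil : W → Set ℕ
  floor_infinite : ∀ w, (floor w).Infinite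
  ceil_infinite : ∀ w, (ceil w).Infinite
  floor_subset_odd : ∀ w, floor w ⊆ {n | Odd n}
  ceil_subset_odd : ∀ w, ceil w ⊆ {n | Odd n}
  pairwise_floor : Pairwise (AlmostDisjoint on floor)
  floor_ceil : ∀ v w, AlmostDisjoint (floor v) (ceil w)
  finite_caught : ∀ w n, {v | v < w ∧ ceil w ∩ floor v ⊆ Iio n}.Finite

theorem LuzinGap.not_separated (L : LuzinGap W) (hIio : ∀ w : W, (Iio w).Countable)
    (hW : ¬ Countable W) (S : Set ℕ)
    (hfloor : ∀ w, ∀ᶠ n in atTop, n ∈ L.floor w → n ∈ S)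
    (hceil : ∀ w, ∀ᶠ n in atTop, n ∈ L.ceil w → n ∉ S) : False := by
  choose a ha using fun w => eventually_atTop.1 (hfloor w)
  choose b hb using fun w => eventually_atTop.1 (hceil w)
  obtain ⟨c, hc⟩ := exists_uncountable_fiber hW a
  obtain ⟨d, hd⟩ := exists_uncountable_fiber hW b
  obtain ⟨w, hwd, hinf⟩ := exists_infinite_inter_Iio hIio hc hd
  refine hinf ((L.finite_caught w (max c d)).subset ?_)
  rintro v ⟨hvc, hvw⟩
  refine ⟨hvw, fun n ⟨hnC, hnF⟩ => ?_⟩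
  simp only [mem_preimage, mem_singleton_iff] at hvc hwd
  simp only [mem_Iio]
  by_contra! hn
  exact hb w n (by omega) hnC (ha v n (by omega) hnF)

theorem LuzinGap.exists_upperBound (L : LuzinGap W) (hIio : ∀ w : W, (Iio w).Countable)
    (hW : ¬ Countable W) {F : Set (ℕ → ℕ)} (hfloor : ∀ w, scaleOn (L.floor w) ∈ F)
    (hceil : ∀ w, scaleNext (L.ceil w) ∈ FDown F) :
    ∃ H ⊆ FDown F, #H ≤ #W ∧ ¬ ∃ g ∈ FDown F, ∀ h ∈ H, Prec g h := by
  refine ⟨range fun w => scaleNext (L.ceil w), range_subset_iff.2 hceil, mk_range_le, ?_⟩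
  rintro ⟨g, ⟨-, hgF⟩, hg⟩
  exact L.not_separated hIio hW {n | scale n ≤ g n}
    (fun w => eventually_scale_le_of_prec (hgF _ (hfloor w)))
    (fun w => (eventually_lt_scale_of_prec (hg _ ⟨w, rfl⟩)).mono fun _ h hn => (h hn).not_ge)

structure IsLuzinStep (C : Set (Set ℕ)) (D : Set ℕ) : Prop where
  infinite : D.Infinite
  subset : D ⊆ ⋃₀ C
  almostDisjoint : ∀ A ∈ C, AlmostDisjoint D A
  finite_caught : ∀ n, {A | A ∈ C ∧ D ∩ A ⊆ Iio n}.Finite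

/-- The set `{x k}` with `x k ∈ E k \ ⋃ j < k, E j` and `k < x k`. -/
lemma exists_luzinStep_seq {E : ℕ → Set ℕ} (hinf : ∀ k, (E k).Infinite)
    (had : Pairwise (AlmostDisjoint on E)) :
    ∃ D : Set ℕ, D.Infinite ∧ D ⊆ ⋃ k, E k ∧ (∀ k, AlmostDisjoint D (E k)) ∧
      ∀ n, {k | D ∩ E k ⊆ Iio n}.Finite := by
  have hx : ∀ k, ∃ x ∈ E k \ ⋃ j ∈ Finset.range k, E j, k < x := fun k =>
    ((almostDisjoint_biUnion fun j hj => had (Finset.mem_range.1 hj).ne).infinite_sdiff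
      (hinf k)).exists_gt k
  choose x hxE hkx using hx
  refine ⟨range x, infinite_of_forall_exists_gt fun k => ⟨x k, mem_range_self k, hkx k⟩,
    range_subset_iff.2 fun k => mem_iUnion_of_mem k (hxE k).1, fun m => ?_, fun n => ?_⟩
  · refine ((finite_Iic m).image x).subset ?_
    rintro _ ⟨⟨k, rfl⟩, hk⟩
    refine ⟨k, mem_Iic.2 (not_lt.1 fun hmk => (hxE k).2 ?_), rfl⟩
    exact mem_biUnion (Finset.mem_coe.2 (Finset.mem_range.2 hmk)) hk
  · refine (finite_Iio n).subset fun k hk => ?_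
    exact (hkx k).trans (hk ⟨mem_range_self k, (hxE k).1⟩)

structure IsOddADFamily (C : Set (Set ℕ)) : Prop where
  countable : C.Countable
  infinite : C.Infinite
  infinite_of_mem : ∀ A ∈ C, A.Infinite
  subset_odd : ⋃₀ C ⊆ {n | Odd n}
  pairwise : C.Pairwise AlmostDisjoint

lemma IsOddADFamily.exists_isLuzinStep {C : Set (Set ℕ)} (hC : IsOddADFamily C) :
    ∃ D, IsLuzinStep C D := by
  have := hC.countable.to_subtype
  have := hC.infinite.to_subtype
  obtain ⟨e⟩ : Nonempty (ℕ ≃ C) := nonempty_equiv_of_countable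
  have hE : ∀ A ∈ C, ∃ k, (e k : Set ℕ) = A := fun A hA => ⟨e.symm ⟨A, hA⟩, by simp⟩
  obtain ⟨D, hinf, hsub, had, hfin⟩ := exists_luzinStep_seq (E := fun k => e k)
    (fun k => hC.infinite_of_mem _ (e k).2)
    (fun j k hjk => hC.pairwise (e j).2 (e k).2 fun h => hjk (e.injective (Subtype.ext h)))
  refine ⟨D, hinf, hsub.trans (iUnion_subset fun k => subset_sUnion_of_mem (e k).2), ?_, ?_⟩
  · rintro A hA
    obtain ⟨k, rfl⟩ := hE A hA
    exact had k
  · refine fun n => ((hfin n).image fun k => (e k : Set ℕ)).subset ?_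
    rintro A ⟨hA, hsubA⟩
    obtain ⟨k, rfl⟩ := hE A hA
    exact ⟨k, hsubA, rfl⟩

noncomputable def luzinStep (C : Set (Set ℕ)) : Set ℕ := Classical.epsilon (IsLuzinStep C)

lemma IsOddADFamily.isLuzinStep {C : Set (Set ℕ)} (hC : IsOddADFamily C) :
    IsLuzinStep C (luzinStep C) :=
  Classical.epsilon_spec hC.exists_isLuzinStep

lemma IsOddADFamily.insert_luzinStep {C : Set (Set ℕ)} (hC : IsOddADFamily C) :
    IsOddADFamily (insert (luzinStep C) C) where
  countable := hC.countable.insert _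
  infinite := hC.infinite.mono (subset_insert _ _)
  infinite_of_mem := forall_mem_insert.2 ⟨hC.isLuzinStep.infinite, hC.infinite_of_mem⟩
  subset_odd := by
    rw [sUnion_insert]
    exact union_subset (hC.isLuzinStep.subset.trans hC.subset_odd) hC.subset_odd
  pairwise := hC.pairwise.insert fun A hA _ =>
    ⟨hC.isLuzinStep.almostDisjoint A hA, (hC.isLuzinStep.almostDisjoint A hA).symm⟩

/-- The seeds keep every stage of the construction countably infinite, hence enumerable by `ℕ`. -/
def luzinSeeds : Set (Set ℕ) := range fun k => range fun a => 2 * Nat.pair k a + 1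

lemma isOddADFamily_luzinSeeds : IsOddADFamily luzinSeeds := by
  have hpair : ∀ {k a k' a'},
      2 * Nat.pair k a + 1 = 2 * Nat.pair k' a' + 1 → k = k' ∧ a = a' :=
    fun h => Nat.pair_eq_pair.1 (by omega)
  have hdisj : ∀ {k k'}, k ≠ k' →
      (range fun a => 2 * Nat.pair k a + 1) ∩ (range fun a => 2 * Nat.pair k' a + 1) = ∅ := by
    rintro k k' hkk'
    ext _
    simp only [mem_inter_iff, mem_range, mem_empty_iff_false, iff_false, not_and]
    rintro ⟨a, rfl⟩ ⟨a', h⟩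
    exact hkk' (hpair h).1.symm
  refine ⟨countable_range _, infinite_range_of_injective fun k k' h => ?_, ?_, ?_, ?_⟩
  · by_contra hkk'
    have := hdisj hkk'
    rw [h, inter_self] at this
    exact (range_nonempty _).ne_empty this
  · rintro _ ⟨k, rfl⟩
    exact infinite_range_of_injective fun a a' h => (hpair h).2
  · rintro n ⟨_, ⟨k, rfl⟩, a, rfl⟩
    exact odd_two_mul_add_one _
  · rintro _ ⟨k, rfl⟩ _ ⟨k', rfl⟩ hne
    rw [AlmostDisjoint, hdisj fun h => hne (by rw [h])]
    exact finite_empty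

section Construction

variable [WellFoundedLT W]

noncomputable def luzinUpto : W → Set (Set ℕ) :=
  wellFounded_lt.fix fun w rec =>
    let below := luzinSeeds ∪ ⋃ (v) (h : v < w), rec v h
    insert (luzinStep (insert (luzinStep below) below)) (insert (luzinStep below) below)

def luzinBelow (w : W) : Set (Set ℕ) := luzinSeeds ∪ ⋃ v ∈ Iio w, luzinUpto v

noncomputable def luzinFloor (w : W) : Set ℕ := luzinStep (luzinBelow w)

noncomputable def luzinCeil (w : W) : Set ℕ := luzinStep (insert (luzinFloor w) (luzinBelow w))

lemma luzinUpto_eq (w : W) :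
    luzinUpto w = insert (luzinCeil w) (insert (luzinFloor w) (luzinBelow w)) := by
  rw [luzinUpto, WellFounded.fix_eq]
  rfl

lemma luzinBelow_subset_luzinUpto (w : W) : luzinBelow w ⊆ luzinUpto w := by
  rw [luzinUpto_eq]
  exact (subset_insert _ _).trans (subset_insert _ _)

lemma luzinUpto_subset_luzinBelow {v w : W} (h : v < w) : luzinUpto v ⊆ luzinBelow w :=
  subset_union_of_subset_right (subset_biUnion_of_mem (u := luzinUpto) (mem_Iio.2 h)) _

lemma luzinUpto_mono : Monotone (luzinUpto (W := W)) := fun v w h => by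
  rcases h.eq_or_lt with rfl | h
  · exact subset_rfl
  · exact (luzinUpto_subset_luzinBelow h).trans (luzinBelow_subset_luzinUpto w)

lemma luzinSeeds_subset_luzinUpto (w : W) : luzinSeeds ⊆ luzinUpto w :=
  subset_union_left.trans (luzinBelow_subset_luzinUpto w)

lemma luzinFloor_mem_luzinBelow {v w : W} (h : v < w) : luzinFloor v ∈ luzinBelow w :=
  luzinUpto_subset_luzinBelow h (by rw [luzinUpto_eq]; exact mem_insert_of_mem _ (mem_insert _ _))

lemma luzinCeil_mem_luzinBelow {v w : W} (h : v < w) : luzinCeil v ∈ luzinBelow w :=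
  luzinUpto_subset_luzinBelow h (by rw [luzinUpto_eq]; exact mem_insert _ _)

lemma isOddADFamily_luzinBelow (hIio : ∀ w : W, (Iio w).Countable) (w : W) :
    IsOddADFamily (luzinBelow w) := by
  induction w using WellFoundedLT.induction with
  | _ w ih =>
  have hup : ∀ v < w, IsOddADFamily (luzinUpto v) := fun v hv => by
    rw [luzinUpto_eq]
    exact (ih v hv).insert_luzinStep.insert_luzinStep
  have hcommon : ∀ A ∈ luzinBelow w, ∀ A' ∈ luzinBelow w,
      ∃ G, IsOddADFamily G ∧ A ∈ G ∧ A' ∈ G := by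
    simp only [luzinBelow, mem_union, mem_iUnion₂, mem_Iio]
    rintro A (hA | ⟨v, hv, hA⟩) A' (hA' | ⟨v', hv', hA'⟩)
    · exact ⟨_, isOddADFamily_luzinSeeds, hA, hA'⟩
    · exact ⟨_, hup v' hv', luzinSeeds_subset_luzinUpto v' hA, hA'⟩
    · exact ⟨_, hup v hv, hA, luzinSeeds_subset_luzinUpto v hA'⟩
    · exact ⟨_, hup (max v v') (max_lt hv hv'), luzinUpto_mono (le_max_left v v') hA,
        luzinUpto_mono (le_max_right v v') hA'⟩
  refine ⟨isOddADFamily_luzinSeeds.countable.union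
      ((hIio w).biUnion fun v hv => (hup v hv).countable),
    isOddADFamily_luzinSeeds.infinite.mono subset_union_left, fun A hA => ?_,
    sUnion_subset fun A hA => ?_, fun A hA A' hA' hne => ?_⟩
  · obtain ⟨G, hG, hAG, -⟩ := hcommon A hA A hA
    exact hG.infinite_of_mem A hAG
  · obtain ⟨G, hG, hAG, -⟩ := hcommon A hA A hA
    exact (subset_sUnion_of_mem hAG).trans hG.subset_odd
  · obtain ⟨G, hG, hAG, hA'G⟩ := hcommon A hA A' hA'
    exact hG.pairwise hAG hA'G hne

lemma isLuzinStep_luzinFloor (hIio : ∀ w : W, (Iio w).Countable) (w : W) :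
    IsLuzinStep (luzinBelow w) (luzinFloor w) :=
  (isOddADFamily_luzinBelow hIio w).isLuzinStep

lemma isLuzinStep_luzinCeil (hIio : ∀ w : W, (Iio w).Countable) (w : W) :
    IsLuzinStep (insert (luzinFloor w) (luzinBelow w)) (luzinCeil w) :=
  (isOddADFamily_luzinBelow hIio w).insert_luzinStep.isLuzinStep

lemma pairwise_almostDisjoint_luzinFloor (hIio : ∀ w : W, (Iio w).Countable) :
    Pairwise (AlmostDisjoint on luzinFloor (W := W)) := fun v w hvw => by
  rcases hvw.lt_or_gt with h | h
  · exact ((isLuzinStep_luzinFloor hIio w).almostDisjoint _ (luzinFloor_mem_luzinBelow h)).symm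
  · exact (isLuzinStep_luzinFloor hIio v).almostDisjoint _ (luzinFloor_mem_luzinBelow h)

theorem nonempty_luzinGap (hIio : ∀ w : W, (Iio w).Countable) : Nonempty (LuzinGap W) := by
  have hfloor := isLuzinStep_luzinFloor hIio
  have hceil := isLuzinStep_luzinCeil hIio
  refine ⟨⟨luzinFloor, luzinCeil, fun w => (hfloor w).infinite, fun w => (hceil w).infinite,
    fun w => (hfloor w).subset.trans (isOddADFamily_luzinBelow hIio w).subset_odd,
    fun w => (hceil w).subset.trans (isOddADFamily_luzinBelow hIio w).insert_luzinStep.subset_odd,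
    pairwise_almostDisjoint_luzinFloor hIio, fun v w => ?_, fun w n => ?_⟩⟩
  · rcases lt_trichotomy v w with h | rfl | h
    · exact ((hceil w).almostDisjoint _ (mem_insert_of_mem _ (luzinFloor_mem_luzinBelow h))).symm
    · exact ((hceil v).almostDisjoint _ (mem_insert _ _)).symm
    · exact (hfloor v).almostDisjoint _ (luzinCeil_mem_luzinBelow h)
  · have hinj := injective_of_pairwise_almostDisjoint (fun w => (hfloor w).infinite)
      (pairwise_almostDisjoint_luzinFloor hIio)
    refine (((hceil w).finite_caught n).preimage hinj.injOn).subset ?_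
    rintro v ⟨hvw, hsub⟩
    exact ⟨mem_insert_of_mem _ (luzinFloor_mem_luzinBelow hvw), hsub⟩

end Construction

end LuzinGap

section PrefixCodes

def encodePrefix (y : ℕ → Bool) (k : ℕ) : ℕ := 2 * Encodable.encode ((List.range k).map y)

def prefixCode (y : ℕ → Bool) : Set ℕ := range (encodePrefix y)

lemma eq_of_encodePrefix_eq {y y' : ℕ → Bool} {k k' : ℕ}
    (h : encodePrefix y k = encodePrefix y' k') : k = k' ∧ ∀ d < k, y d = y' d := by
  have hl : (List.range k).map y = (List.range k').map y' :=
    Encodable.encode_injective (by simp only [encodePrefix] at h; omega)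
  have hk : k = k' := by simpa using congrArg List.length hl
  refine ⟨hk, fun d hd => ?_⟩
  have := congrArg (·[d]?) hl
  simp only [List.getElem?_map, List.getElem?_range, hd, ← hk, Option.map_some] at this
  exact Option.some_injective _ this

lemma prefixCode_infinite (y : ℕ → Bool) : (prefixCode y).Infinite :=
  infinite_range_of_injective fun _ _ h => (eq_of_encodePrefix_eq h).1

lemma prefixCode_subset_even (y : ℕ → Bool) : prefixCode y ⊆ {n | Even n} := by
  rintro _ ⟨k, rfl⟩
  exact even_two_mul _

lemma pairwise_almostDisjoint_prefixCode : Pairwise (AlmostDisjoint on prefixCode) := by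
  intro y y' hyy'
  obtain ⟨d, hd⟩ := Function.ne_iff.1 hyy'
  refine ((finite_Iic d).image (encodePrefix y)).subset ?_
  rintro _ ⟨⟨k, rfl⟩, k', hk'⟩
  obtain ⟨rfl, hagree⟩ := eq_of_encodePrefix_eq hk'
  exact ⟨k', mem_Iic.2 (not_lt.1 fun hdk => hd (hagree d hdk).symm), rfl⟩

end PrefixCodes

section Assembly

variable {W : Type} [LinearOrder W] (X : Set (ℕ → Bool)) (L : LuzinGap W)

def adFamily : X ⊕ W → Set ℕ := Sum.elim (fun x => prefixCode x) L.floor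

lemma adFamily_infinite : ∀ i, (adFamily X L i).Infinite
  | .inl x => prefixCode_infinite x
  | .inr w => L.floor_infinite w

lemma pairwise_almostDisjoint_adFamily : Pairwise (AlmostDisjoint on adFamily X L)
  | .inl _, .inl _, h => pairwise_almostDisjoint_prefixCode fun e => h (congrArg _ (Subtype.ext e))
  | .inl x, .inr w, _ =>
    almostDisjoint_of_subset_even_of_subset_odd (prefixCode_subset_even x) (L.floor_subset_odd w)
  | .inr w, .inl x, _ =>
    (almostDisjoint_of_subset_even_of_subset_odd (prefixCode_subset_even x)
      (L.floor_subset_odd w)).symm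
  | .inr _, .inr _, h => L.pairwise_floor fun e => h (congrArg _ e)

lemma almostDisjoint_adFamily_ceil (w : W) : ∀ i, AlmostDisjoint (adFamily X L i) (L.ceil w)
  | .inl x =>
    almostDisjoint_of_subset_even_of_subset_odd (prefixCode_subset_even x) (L.ceil_subset_odd w)
  | .inr v => L.floor_ceil v w

end Assembly

lemma countable_Iio_omega1 (w : (ω₁ : Ordinal.{0}).ToType) : (Iio w).Countable := by
  rw [← le_aleph0_iff_set_countable, ← lt_aleph_one_iff]
  simpa using mk_Iio_lt w

lemma not_countable_omega1 : ¬ Countable (ω₁ : Ordinal.{0}).ToType := by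
  simp [← mk_le_aleph0_iff]

/-- For `λ ∈ {1, 2, ℵ₀}` and `ℵ₁ ≤ κ ≤ 𝔠`, there is a
downward-closed family with `b(F) = λ`, `d(F) = κ` and upper bound at most `ω₁`. -/
theorem bounded_family_upper_bound_omega1
    (lam : Cardinal) (hlam : lam ∈ ({1, 2, Cardinal.aleph0} : Set Cardinal))
    (kappa : Cardinal) (h1 : Cardinal.aleph 1 ≤ kappa) (h2 : kappa ≤ Cardinal.continuum) :
    ∃ F : Set (ℕ → ℕ), F ⊆ MonoFam ∧ DownwardClosed F ∧
      bNum F = lam ∧ dNum F = kappa ∧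
      ∃ H : Set (ℕ → ℕ), H ⊆ FDown F ∧ Cardinal.mk H ≤ Cardinal.aleph 1 ∧
        ¬ ∃ g ∈ FDown F, ∀ h ∈ H, Prec g h := by
  obtain ⟨X, hX⟩ := le_mk_iff_exists_set.1 (by simpa using h2 : kappa ≤ #(ℕ → Bool))
  obtain ⟨L⟩ := nonempty_luzinGap countable_Iio_omega1
  have hκ : ℵ₀ < kappa := aleph_one_le_iff.1 h1
  have hι : #(X ⊕ (ω₁ : Ordinal.{0}).ToType) = kappa := by simp [hX, add_eq_left hκ.le h1]
  have : Nontrivial (X ⊕ (ω₁ : Ordinal.{0}).ToType) :=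
    one_lt_iff_nontrivial.1 (hι ▸ one_lt_aleph0.trans hκ)
  have hinf := adFamily_infinite X L
  have had := pairwise_almostDisjoint_adFamily X L
  have hF : ∀ P, (∀ i, ({i}, 0, 0) ∈ P) → dNum (genFamily (adFamily X L) P) = kappa ∧
      ∃ H ⊆ FDown (genFamily (adFamily X L) P), #H ≤ Cardinal.aleph 1 ∧
        ¬ ∃ g ∈ FDown (genFamily (adFamily X L) P), ∀ h ∈ H, Prec g h := fun P hP => by
    refine ⟨(dNum_genFamily hinf had (hι ▸ hκ) hP).trans hι, ?_⟩
    obtain ⟨H, hHF, hH, hgap⟩ := L.exists_upperBound countable_Iio_omega1 not_countable_omega1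
      (F := genFamily (adFamily X L) P) (fun w => scaleOn_mem_genFamily (hP (.inr w)))
      (fun w => scaleNext_mem_fDown_genFamily (L.ceil_infinite w)
        (almostDisjoint_adFamily_ceil X L w))
    exact ⟨H, hHF, hH.trans (by simp), hgap⟩
  rcases hlam with rfl | rfl | rfl
  · exact ⟨_, downClosure_subset_monoFam _, downwardClosed_downClosure _,
      bNum_genFamily_singletons hinf, hF _ fun i => ⟨i, rfl⟩⟩
  · exact ⟨_, downClosure_subset_monoFam _, downwardClosed_downClosure _,
      bNum_genFamily_shifts hinf had, hF _ fun i => ⟨(i, 0), rfl⟩⟩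
  · exact ⟨_, downClosure_subset_monoFam _, downwardClosed_downClosure _,
      bNum_genFamily_univ hinf, hF _ fun _ => trivial⟩
end
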